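/- arXiv:0708.0677 — 6 statements merged into one kernel-verified Lean document; each statement's English description precedes it below -/
import Mathlib

section
/- Let R be a von Neumann algebra and A, B selfadjoint elements with spectral families E^A and E^B. Then A ≤_s B (i.e., the observable function of A is pointwise at most that of B on nonzero projections) if and only if E^B_λ ≤ E^A_λ for all real λ. -/
/-!
By right continuity the infimum defining `obsFun F P` is attained, so for `P ≠ ⊥` we get
`P ≤ F.E l ↔ obsFun F P ≤ l`. With this, `E^B_l ≤ E^A_l` follows from `A ≤_s B` by testing on
`P = E^B_l`, and conversely `P ≤ E^B_{f_B(P)} ≤ E^A_{f_B(P)}` gives `f_A(P) ≤ f_B(P)`.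
-/

/-- A bounded spectral family in a complete lattice `L` (of projections):
an increasing, order-right-continuous family of projections that is
eventually `⊥` below and eventually `⊤` above. -/
structure SpectralFamily (L : Type*) [CompleteLattice L] where
  E : ℝ → L
  mono : Monotone E
  rightCont : ∀ l : ℝ, E l = ⨅ m : Set.Ioi l, E m.1
  eq_bot : ∃ l : ℝ, E l = ⊥
  eq_top : ∃ l : ℝ, E l = ⊤

/-- The observable function of a spectral family, on (nonzero) projections:
`f_A(P) = inf { λ | P ≤ E^A_λ }`. -/
noncomputable def obsFun {L : Type*} [CompleteLattice L] (F : SpectralFamily L) (P : L) : ℝ :=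
  sInf {l : ℝ | P ≤ F.E l}

namespace SpectralFamily

variable {L : Type*} [CompleteLattice L] (F : SpectralFamily L)

lemma nonempty_setOf_le_E (P : L) : {l : ℝ | P ≤ F.E l}.Nonempty := by
  obtain ⟨l, hl⟩ := F.eq_top
  exact ⟨l, by simp [hl]⟩

lemma bddBelow_setOf_le_E {P : L} (hP : P ≠ ⊥) : BddBelow {l : ℝ | P ≤ F.E l} := by
  obtain ⟨l₀, hl₀⟩ := F.eq_bot
  refine ⟨l₀, fun l hl => le_of_not_gt fun hlt => hP ?_⟩
  exact le_bot_iff.mp (hl₀ ▸ hl.trans (F.mono hlt.le))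

lemma le_E_obsFun (P : L) : P ≤ F.E (obsFun F P) := by
  rw [F.rightCont]
  refine le_iInf fun ⟨m, hm⟩ => ?_
  obtain ⟨l, hl, hlm⟩ := exists_lt_of_csInf_lt (F.nonempty_setOf_le_E P) hm
  exact hl.trans (F.mono hlm.le)

lemma le_E_iff_obsFun_le {P : L} (hP : P ≠ ⊥) (l : ℝ) : P ≤ F.E l ↔ obsFun F P ≤ l :=
  ⟨fun hl => csInf_le (F.bddBelow_setOf_le_E hP) hl,
    fun hl => (F.le_E_obsFun P).trans (F.mono hl)⟩

end SpectralFamily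

/-- `A ≤_s B` (pointwise comparison of observable functions on nonzero
projections) holds iff `E^B_λ ≤ E^A_λ` for all real `λ`. -/
theorem spectral_order_iff_obsFun_le {L : Type*} [CompleteLattice L]
    (A B : SpectralFamily L) :
    (∀ P : L, P ≠ ⊥ → obsFun A P ≤ obsFun B P) ↔ ∀ l : ℝ, B.E l ≤ A.E l := by
  constructor
  · intro hAB l
    rcases eq_or_ne (B.E l) ⊥ with hbot | hne
    · simp [hbot]
    have hB : obsFun B (B.E l) ≤ l := (B.le_E_iff_obsFun_le hne l).mp le_rfl
    exact (A.le_E_iff_obsFun_le hne l).mpr ((hAB _ hne).trans hB)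
  · intro hBA P hP
    exact (A.le_E_iff_obsFun_le hP _).mp ((B.le_E_obsFun P).trans (hBA _))
end

section
/- Let M be a von Neumann subalgebra of R and E = (E_λ) a spectral family in R. Then the family (c_M(E_λ))_{λ∈ℝ} is again a spectral family, i.e., it is increasing, and satisfies ⋀_{μ>λ} c_M(E_μ) = c_M(E_λ) for all λ, with the same boundedness conditions (eventually 0 below and I above). -/
/-- The `M`-core of a projection: `c_M(Q) = ⋁{ P ∈ M | P ≤ Q }`. -/
noncomputable def core {L : Type*} [CompleteLattice L] (M : Set L) (Q : L) : L :=
  sSup {p | p ∈ M ∧ p ≤ Q}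

def SpectralFamily.map {L L' : Type*} [CompleteLattice L] [CompleteLattice L']
    (F : SpectralFamily L) (f : sInfHom L L') (hf : f ⊥ = ⊥) : SpectralFamily L' where
  E l := f (F.E l)
  mono := (OrderHomClass.mono f).comp F.mono
  rightCont l := by rw [F.rightCont l, map_iInf]
  eq_bot := F.eq_bot.imp fun l hl => by rw [hl, hf]
  eq_top := F.eq_top.imp fun l hl => by rw [hl, map_top]

section Core

variable {L : Type*} [CompleteLattice L] {M : Set L}

lemma core_mem (hSup : ∀ S ⊆ M, sSup S ∈ M) (Q : L) : core M Q ∈ M :=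
  hSup _ fun _ hp => hp.1

lemma core_le (Q : L) : core M Q ≤ Q :=
  sSup_le fun _ hp => hp.2

lemma le_core {P Q : L} (hP : P ∈ M) (h : P ≤ Q) : P ≤ core M Q :=
  le_sSup ⟨hP, h⟩

lemma core_mono : Monotone (core M) :=
  fun _ _ h => sSup_le_sSup fun _ hp => ⟨hp.1, hp.2.trans h⟩

lemma core_bot : core M ⊥ = ⊥ :=
  le_bot_iff.mp (core_le ⊥)

/-- `core M` is right adjoint to the inclusion of `M`, hence preserves infima once `M` is closed
under them. -/
lemma core_sInf (hInf : ∀ S ⊆ M, sInf S ∈ M) (hSup : ∀ S ⊆ M, sSup S ∈ M) (s : Set L) :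
    core M (sInf s) = sInf (core M '' s) := by
  refine le_antisymm (le_sInf ?_) (le_core ?_ (le_sInf fun q hq => ?_))
  · rintro _ ⟨q, hq, rfl⟩
    exact core_mono (sInf_le hq)
  · exact hInf _ (Set.image_subset_iff.mpr fun q _ => core_mem hSup q)
  · exact (sInf_le (Set.mem_image_of_mem _ hq)).trans (core_le q)

variable (M) in
noncomputable def coreSInfHom (hInf : ∀ S ⊆ M, sInf S ∈ M) (hSup : ∀ S ⊆ M, sSup S ∈ M) :
    sInfHom L L where
  toFun := core M
  map_sInf' := core_sInf hInf hSup

end Core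

theorem core_spectralFamily_general {L : Type*} [CompleteLattice L] (M : Set L)
    (hInf : ∀ S ⊆ M, sInf S ∈ M) (hSup : ∀ S ⊆ M, sSup S ∈ M)
    (F : SpectralFamily L) :
    ∃ G : SpectralFamily L, (∀ l : ℝ, G.E l = core M (F.E l)) ∧ ∀ l : ℝ, G.E l ∈ M :=
  ⟨F.map (coreSInfHom M hInf hSup) core_bot, fun _ => rfl, fun _ => core_mem hSup _⟩

/-- if `M` is a complete sublattice (projection lattice of a von
Neumann subalgebra) then `(c_M(E_λ))_λ` is again a (bounded) spectral family,
with values in `M`. -/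
theorem core_spectralFamily {L : Type*} [CompleteLattice L] (M : Set L)
    (hbot : ⊥ ∈ M) (htop : ⊤ ∈ M)
    (hInf : ∀ S ⊆ M, sInf S ∈ M) (hSup : ∀ S ⊆ M, sSup S ∈ M)
    (F : SpectralFamily L) :
    ∃ G : SpectralFamily L, (∀ l : ℝ, G.E l = core M (F.E l)) ∧ ∀ l : ℝ, G.E l ∈ M :=
  core_spectralFamily_general M hInf hSup F
end

section
/- Let M be a von Neumann subalgebra of R and E = (E_λ) a spectral family in R. Define (s_M E)_λ := ⋀_{μ>λ} s_M(E_μ). Then (s_M E) is a spectral family in M. -/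
/-- The `M`-support of a projection: `s_M(Q) = ⋀{ P ∈ M | Q ≤ P }`. -/
noncomputable def supp {L : Type*} [CompleteLattice L] (M : Set L) (Q : L) : L :=
  sInf {p | p ∈ M ∧ Q ≤ p}

/-!
The regularization `l ↦ ⋀_{m > l} f m` of any family `f : ℝ → L` is monotone and
right-continuous, since `⋀_{m > l} ⋀_{μ > m} = ⋀_{μ > l}` by density of `ℝ`. Applied to
`f = s_M ∘ E`, which is monotone, vanishes where `E` does (as `⊥ ∈ M`) and is `⊤` where `E` is,
it gives a spectral family whose values are infima of elements of `M`, hence lie in `M`.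
-/

section Lattice

variable {L : Type*} [CompleteLattice L]

section Support

variable (M : Set L)

theorem supp_mono : Monotone (supp M) :=
  fun _ _ hPQ => sInf_le_sInf fun _ hp => ⟨hp.1, hPQ.trans hp.2⟩

theorem supp_bot (hbot : ⊥ ∈ M) : supp M ⊥ = ⊥ :=
  le_bot_iff.1 (sInf_le ⟨hbot, le_rfl⟩)

theorem supp_top : supp M ⊤ = ⊤ :=
  top_le_iff.1 (le_sInf fun _ hp => hp.2)

theorem supp_mem (hInf : ∀ S ⊆ M, sInf S ∈ M) (Q : L) : supp M Q ∈ M :=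
  hInf _ fun _ hp => hp.1

end Support

section RightInf

noncomputable def rightInf (f : ℝ → L) (l : ℝ) : L :=
  ⨅ m : Set.Ioi l, f m.1

variable (f : ℝ → L)

theorem rightInf_le {l m : ℝ} (h : l < m) : rightInf f l ≤ f m :=
  iInf_le (fun m : Set.Ioi l => f m.1) ⟨m, h⟩

theorem rightInf_mono : Monotone (rightInf f) :=
  fun _ _ hab => le_iInf fun m => rightInf_le f (hab.trans_lt m.2)

theorem rightInf_rightInf (l : ℝ) : rightInf (rightInf f) l = rightInf f l := by
  refine le_antisymm (le_iInf fun μ => ?_) (le_iInf fun m => rightInf_mono f m.2.le)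
  obtain ⟨c, hlc, hcμ⟩ := exists_between (Set.mem_Ioi.1 μ.2)
  exact (rightInf_le _ hlc).trans (rightInf_le f hcμ)

theorem rightInf_eq_bot {l : ℝ} (h : f l = ⊥) : rightInf f (l - 1) = ⊥ :=
  le_bot_iff.1 (h ▸ rightInf_le f (sub_one_lt l))

theorem rightInf_eq_top {f : ℝ → L} (hf : Monotone f) {l : ℝ} (h : f l = ⊤) :
    rightInf f l = ⊤ :=
  top_le_iff.1 (le_iInf fun m => h ▸ hf m.2.le)

theorem rightInf_mem {M : Set L} (hInf : ∀ S ⊆ M, sInf S ∈ M) (hf : ∀ l, f l ∈ M) (l : ℝ) :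
    rightInf f l ∈ M :=
  hInf _ (Set.range_subset_iff.2 fun m => hf m.1)

end RightInf

noncomputable def SpectralFamily.ofMonotone (f : ℝ → L) (hf : Monotone f)
    (hbot : ∃ l, f l = ⊥) (htop : ∃ l, f l = ⊤) : SpectralFamily L where
  E := rightInf f
  mono := rightInf_mono f
  rightCont l := (rightInf_rightInf f l).symm
  eq_bot := let ⟨l, h⟩ := hbot; ⟨l - 1, rightInf_eq_bot f h⟩
  eq_top := htop.imp fun _ h => rightInf_eq_top hf h

end Lattice

theorem supp_spectralFamily_general {L : Type*} [CompleteLattice L] (M : Set L)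
    (hbot : ⊥ ∈ M)
    (hInf : ∀ S ⊆ M, sInf S ∈ M)
    (F : SpectralFamily L) :
    ∃ G : SpectralFamily L,
      (∀ l : ℝ, G.E l = ⨅ m : Set.Ioi l, supp M (F.E m.1)) ∧ ∀ l : ℝ, G.E l ∈ M := by
  have hbot' : ∃ l, supp M (F.E l) = ⊥ := F.eq_bot.imp fun _ h => by rw [h, supp_bot M hbot]
  have htop' : ∃ l, supp M (F.E l) = ⊤ := F.eq_top.imp fun _ h => by rw [h, supp_top M]
  exact ⟨.ofMonotone _ ((supp_mono M).comp F.mono) hbot' htop', fun _ => rfl,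
    rightInf_mem _ hInf (fun _ => supp_mem M hInf _)⟩

/-- if `M` is a complete sublattice then
`(s_M E)_λ := ⋀_{μ>λ} s_M(E_μ)` defines a spectral family in `M`. -/
theorem supp_spectralFamily {L : Type*} [CompleteLattice L] (M : Set L)
    (hbot : ⊥ ∈ M) (htop : ⊤ ∈ M)
    (hInf : ∀ S ⊆ M, sInf S ∈ M) (hSup : ∀ S ⊆ M, sSup S ∈ M)
    (F : SpectralFamily L) :
    ∃ G : SpectralFamily L,
      (∀ l : ℝ, G.E l = ⨅ m : Set.Ioi l, supp M (F.E m.1)) ∧ ∀ l : ℝ, G.E l ∈ M :=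
  supp_spectralFamily_general M hbot hInf F
end

section
/- Let P, Q be projections on a Hilbert space H. Then QPQ is a projection if and only if P commutes with Q. -/
/-!
With `d := p q - q p q = (1 - q) p q` one computes `d⋆ d = q p q - (q p q)²`, so by the
C⋆-identity `q p q` is idempotent exactly when `p q = q p q`. The latter makes `p q`
self-adjoint, i.e. `p q = q p`.
-/

namespace IsStarProjection

variable {R : Type*} {p q : R}

theorem commute_iff_mul_eq_mul_mul [NonUnitalRing R] [StarRing R]
    (hp : IsSelfAdjoint p) (hq : IsStarProjection q) :
    Commute p q ↔ p * q = q * p * q := by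
  constructor
  · intro h
    rw [mul_assoc, h.eq, ← mul_assoc, hq.isIdempotentElem.eq]
  · intro h
    have hsa : star (p * q) = p * q := by
      rw [h, star_mul, star_mul, hp.star_eq, hq.isSelfAdjoint.star_eq, mul_assoc]
    rw [Commute, SemiconjBy, ← hsa, star_mul, hp.star_eq,
      hq.isSelfAdjoint.star_eq]

theorem star_mul_self_sub_mul_mul [NonUnitalRing R] [StarRing R]
    (hp : IsStarProjection p) (hq : IsStarProjection q) :
    star (p * q - q * p * q) * (p * q - q * p * q) = q * p * q - q * p * q * (q * p * q) := by
  have hp2 : p * p = p := hp.isIdempotentElem.eq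
  have hq2 : q * q = q := hq.isIdempotentElem.eq
  rw [star_sub, star_mul, star_mul, star_mul, hp.isSelfAdjoint.star_eq,
    hq.isSelfAdjoint.star_eq]
  calc (q * p - q * (p * q)) * (p * q - q * p * q)
      = q * (p * p) * q - q * p * q * p * q - q * p * q * p * q
          + q * p * (q * q) * p * q := by noncomm_ring
    _ = q * p * q - q * p * (q * q) * p * q := by rw [hp2, hq2]; noncomm_ring
    _ = q * p * q - q * p * q * (q * p * q) := by noncomm_ring

theorem isIdempotentElem_mul_mul_iff [NonUnitalNormedRing R] [StarRing R] [CStarRing R]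
    (hp : IsStarProjection p) (hq : IsStarProjection q) :
    IsIdempotentElem (q * p * q) ↔ p * q = q * p * q := by
  rw [← sub_eq_zero, ← CStarRing.star_mul_self_eq_zero_iff,
    star_mul_self_sub_mul_mul hp hq, sub_eq_zero, IsIdempotentElem, eq_comm]

theorem isIdempotentElem_mul_mul_iff_commute [NonUnitalNormedRing R] [StarRing R] [CStarRing R]
    (hp : IsStarProjection p) (hq : IsStarProjection q) :
    IsIdempotentElem (q * p * q) ↔ Commute p q := by
  rw [isIdempotentElem_mul_mul_iff hp hq, commute_iff_mul_eq_mul_mul hp.isSelfAdjoint hq]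

end IsStarProjection

/-- for orthogonal projections `P, Q` on a Hilbert space `H`,
`QPQ` is a projection iff `P` commutes with `Q`. -/
theorem qpq_isProjection_iff_commute {H : Type*} [NormedAddCommGroup H]
    [InnerProductSpace ℂ H] [CompleteSpace H] (P Q : H →L[ℂ] H)
    (hP : IsSelfAdjoint P) (hP2 : IsIdempotentElem P)
    (hQ : IsSelfAdjoint Q) (hQ2 : IsIdempotentElem Q) :
    IsIdempotentElem (Q * P * Q) ↔ Commute P Q :=
  IsStarProjection.isIdempotentElem_mul_mul_iff_commute ⟨hP2, hP⟩ ⟨hQ2, hQ⟩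
end

section
/- Let R be a von Neumann algebra with trivial subalgebra ℂI and A ∈ R selfadjoint with spectral family E^A. Let m_A = inf{ λ | E^A_λ ≠ 0 } and M_A = min{ λ | E^A_λ = I }. Then σ_{ℂI} A = m_A · I and ρ_{ℂI} A = M_A · I; in particular m_A I ≤ A ≤ M_A I. -/
/-- The spectral order: `A ≤_s B` iff `E^B_λ ≤ E^A_λ` for all `λ`. -/
instance {L : Type*} [CompleteLattice L] : Preorder (SpectralFamily L) where
  le A B := ∀ l : ℝ, B.E l ≤ A.E l
  le_refl A l := le_rfl
  le_trans A B C hab hbc l := le_trans (hbc l) (hab l)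


/-!
A scalar spectral family `B` (all `E_λ ∈ {⊥, ⊤}`) is the step family of `M_B • I`.
Moreover `c • I ≤_s A` iff `c ≤ m_A`, and `A ≤_s c • I` iff `M_A ≤ c`, because right
continuity gives `E^A_{M_A} = ⊤`. Hence `m_A • I` is the greatest scalar family below `A`
and `M_A • I` the least one above it, so they are the supremum and the infimum.
-/

namespace SpectralFamily

/-- The spectral family of `c • I`. -/
noncomputable def const (L : Type*) [CompleteLattice L] (c : ℝ) : SpectralFamily L where
  E l := if l < c then ⊥ else ⊤
  mono a b hab := by
    beta_reduce
    split_ifs with ha hb hb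
    · exact le_rfl
    · exact bot_le
    · exact absurd (hab.trans_lt hb) ha
    · exact le_rfl
  rightCont l := by
    split_ifs with h
    · obtain ⟨m, hlm, hmc⟩ := exists_between h
      exact le_antisymm bot_le (iInf_le_of_le ⟨m, hlm⟩ (if_pos hmc).le)
    · exact (iInf_eq_top.2 fun m => if_neg fun hm => h (m.2.trans hm)).symm
  eq_bot := ⟨c - 1, if_pos (by linarith)⟩
  eq_top := ⟨c, if_neg (lt_irrefl c)⟩

variable {L : Type*} [CompleteLattice L]

def IsScalar (B : SpectralFamily L) : Prop := ∀ l, B.E l = ⊥ ∨ B.E l = ⊤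

noncomputable def lowerBound (A : SpectralFamily L) : ℝ := sInf {l | A.E l ≠ ⊥}

noncomputable def upperBound (A : SpectralFamily L) : ℝ := sInf {l | A.E l = ⊤}

theorem E_eq_of_le_of_ge {A B : SpectralFamily L} (h₁ : A ≤ B) (h₂ : B ≤ A) : A.E = B.E :=
  funext fun l => le_antisymm (h₂ l) (h₁ l)

theorem const_le_const {a b : ℝ} (h : a ≤ b) : const L a ≤ const L b := fun l => by
  dsimp only [const]
  by_cases hb : l < b
  · exact (if_pos hb).trans_le bot_le
  · rw [if_neg hb, if_neg fun ha => hb (ha.trans_le h)]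

theorem const_isScalar (c : ℝ) : (const L c).IsScalar := fun l => by
  by_cases h : l < c
  · exact .inl (if_pos h)
  · exact .inr (if_neg h)

theorem E_eq_top_of_forall_gt (A : SpectralFamily L) {c : ℝ} (h : ∀ l, c < l → A.E l = ⊤) :
    A.E c = ⊤ := by
  rw [A.rightCont c]
  exact iInf_eq_top.2 fun m => h m.1 m.2

theorem bddBelow_setOf_ne_bot (A : SpectralFamily L) : BddBelow {l | A.E l ≠ ⊥} := by
  obtain ⟨l₀, hl₀⟩ := A.eq_bot
  refine ⟨l₀, fun l hl => le_of_not_gt fun hlt => hl ?_⟩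
  exact le_bot_iff.1 (hl₀ ▸ A.mono hlt.le)

section Nontrivial

variable [Nontrivial L] (A : SpectralFamily L)

theorem setOf_eq_top_subset_setOf_ne_bot : {l | A.E l = ⊤} ⊆ {l | A.E l ≠ ⊥} :=
  fun l (hl : A.E l = ⊤) => show A.E l ≠ ⊥ by simp [hl]

theorem bddBelow_setOf_eq_top : BddBelow {l | A.E l = ⊤} :=
  A.bddBelow_setOf_ne_bot.mono A.setOf_eq_top_subset_setOf_ne_bot

theorem E_upperBound : A.E A.upperBound = ⊤ := by
  refine A.E_eq_top_of_forall_gt fun l hl => ?_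
  obtain ⟨l', hl', hl'l⟩ := (csInf_lt_iff A.bddBelow_setOf_eq_top A.eq_top).1 hl
  exact top_le_iff.1 (hl' ▸ A.mono hl'l.le)

theorem const_le_iff_le_lowerBound {c : ℝ} : const L c ≤ A ↔ c ≤ A.lowerBound := by
  have hne : {l | A.E l ≠ ⊥}.Nonempty :=
    Set.Nonempty.mono A.setOf_eq_top_subset_setOf_ne_bot A.eq_top
  constructor
  · intro h
    refine le_csInf hne fun l hl => le_of_not_gt fun hlc => hl ?_
    simpa [const, hlc] using h l
  · intro h l
    dsimp only [const]
    split_ifs with hlc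
    · exact (not_not.1 (notMem_of_lt_csInf (hlc.trans_le h) A.bddBelow_setOf_ne_bot)).le
    · exact le_top

theorem le_const_iff_upperBound_le {c : ℝ} : A ≤ const L c ↔ A.upperBound ≤ c := by
  constructor
  · intro h
    exact csInf_le A.bddBelow_setOf_eq_top (top_le_iff.1 (by simpa [const] using h c))
  · intro h l
    dsimp only [const]
    split_ifs with hlc
    · exact bot_le
    · exact A.E_upperBound ▸ A.mono (h.trans (not_lt.1 hlc))

theorem le_const_upperBound : A ≤ const L A.upperBound :=
  (A.le_const_iff_upperBound_le).2 le_rfl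

theorem IsScalar.const_upperBound_le {B : SpectralFamily L} (hB : B.IsScalar) :
    const L B.upperBound ≤ B := fun l => by
  dsimp only [const]
  split_ifs with hl
  · have hne : B.E l ≠ ⊤ :=
      notMem_of_lt_csInf (s := {l | B.E l = ⊤}) hl B.bddBelow_setOf_eq_top
    exact ((hB l).resolve_right hne).le
  · exact le_top

theorem isGreatest_const_lowerBound :
    IsGreatest {B | B.IsScalar ∧ B ≤ A} (const L A.lowerBound) := by
  refine ⟨⟨const_isScalar _, (A.const_le_iff_le_lowerBound).2 le_rfl⟩, ?_⟩
  rintro B ⟨hB, hBA⟩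
  have : B.upperBound ≤ A.lowerBound :=
    (A.const_le_iff_le_lowerBound).1 (hB.const_upperBound_le.trans hBA)
  exact B.le_const_upperBound.trans (const_le_const this)

theorem isLeast_const_upperBound :
    IsLeast {C | C.IsScalar ∧ A ≤ C} (const L A.upperBound) := by
  refine ⟨⟨const_isScalar _, A.le_const_upperBound⟩, ?_⟩
  rintro C ⟨hC, hAC⟩
  have : A.upperBound ≤ C.upperBound :=
    (A.le_const_iff_upperBound_le).1 (hAC.trans C.le_const_upperBound)
  exact (const_le_const this).trans hC.const_upperBound_le

end Nontrivial

end SpectralFamily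

open SpectralFamily in
/-- for the trivial subalgebra `ℂI` (projection lattice `{⊥, ⊤}`),
with `m_A = inf{λ | E^A_λ ≠ ⊥}` and `M_A = min{λ | E^A_λ = ⊤}`, the lower and
upper restrictions are `σ_{ℂI} A = m_A·I` and `ρ_{ℂI} A = M_A·I` (the spectral
family of `c·I` is `⊥` for `λ < c` and `⊤` for `λ ≥ c`); in particular
`m_A I ≤_s A ≤_s M_A I`. -/
theorem trivial_restrictions {L : Type*} [CompleteLattice L]
    (A ρA σA : SpectralFamily L) (M : Set L) (hM : M = {x : L | x = ⊥ ∨ x = ⊤})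
    (hρ : IsGLB {C : SpectralFamily L | (∀ l : ℝ, C.E l ∈ M) ∧ A ≤ C} ρA)
    (hσ : IsLUB {B : SpectralFamily L | (∀ l : ℝ, B.E l ∈ M) ∧ B ≤ A} σA) :
    (∀ l : ℝ, σA.E l = if l < sInf {l : ℝ | A.E l ≠ ⊥} then ⊥ else ⊤) ∧
    (∀ l : ℝ, ρA.E l = if l < sInf {l : ℝ | A.E l = ⊤} then ⊥ else ⊤) ∧
    (∀ l : ℝ, A.E l ≤ (if l < sInf {l : ℝ | A.E l ≠ ⊥} then (⊥ : L) else ⊤)) ∧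
    (∀ l : ℝ, (if l < sInf {l : ℝ | A.E l = ⊤} then (⊥ : L) else ⊤) ≤ A.E l) := by
  subst hM
  rcases subsingleton_or_nontrivial L with hL | hL
  · exact ⟨fun _ => Subsingleton.elim _ _, fun _ => Subsingleton.elim _ _,
      fun _ => (Subsingleton.elim _ _).le, fun _ => (Subsingleton.elim _ _).le⟩
  have hlow := A.isGreatest_const_lowerBound
  have hup := A.isLeast_const_upperBound
  exact ⟨congrFun (E_eq_of_le_of_ge (hσ.2 hlow.2) (hσ.1 hlow.1)),
    congrFun (E_eq_of_le_of_ge (hρ.1 hup.1) (hρ.2 hup.2)), hlow.1.2, hup.1.2⟩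
end

section
/- There exists a global section of the observable presheaf of L(ℂ³) that is not induced by any selfadjoint operator: given two noncommuting rank-one projections P₁, P₂, the family assigning to each abelian von Neumann subalgebra A the projection Q_A = I − P_k if P_k ∈ A (k = 1,2) and Q_A = I otherwise is a compatible family (global section) but is not the family of restrictions ρ_A(A₀) of any single selfadjoint A₀ ∈ L(ℂ³). -/
open scoped Classical

noncomputable section

/-- The orthogonal projection onto a subspace `K` of `ℂ³`, as an operator. -/
def opOf (K : Submodule ℂ (EuclideanSpace ℂ (Fin 3))) :
    EuclideanSpace ℂ (Fin 3) →L[ℂ] EuclideanSpace ℂ (Fin 3) :=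
  K.subtypeL.comp (K.orthogonalProjectionOnto)

/-- An abelian (von Neumann, automatically so in finite dimension) subalgebra
of `L(ℂ³)`. -/
def IsAbelianStar
    (A : StarSubalgebra ℂ (EuclideanSpace ℂ (Fin 3) →L[ℂ] EuclideanSpace ℂ (Fin 3))) : Prop :=
  ∀ a ∈ A, ∀ b ∈ A, a * b = b * a

/-- The `A`-support of a projection (represented by its range subspace `K`):
`s_A(K) = ⋀{ W | proj W ∈ A, K ≤ W }`. -/
def suppA
    (A : StarSubalgebra ℂ (EuclideanSpace ℂ (Fin 3) →L[ℂ] EuclideanSpace ℂ (Fin 3)))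
    (K : Submodule ℂ (EuclideanSpace ℂ (Fin 3))) : Submodule ℂ (EuclideanSpace ℂ (Fin 3)) :=
  sInf {W | opOf W ∈ A ∧ K ≤ W}

/-- The spectral family of an operator on `ℂ³`:
`E^T_λ` = sum of the eigenspaces with eigenvalue `≤ λ`. -/
def specE (T : EuclideanSpace ℂ (Fin 3) →L[ℂ] EuclideanSpace ℂ (Fin 3)) (l : ℝ) :
    Submodule ℂ (EuclideanSpace ℂ (Fin 3)) :=
  ⨆ m : {m : ℝ // m ≤ l}, Module.End.eigenspace (T.toLinearMap : Module.End ℂ _) (m.1 : ℂ)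

/-- The spectral order: `S ≤_s T` iff `E^T_λ ≤ E^S_λ` for all `λ`. -/
def specLE (S T : EuclideanSpace ℂ (Fin 3) →L[ℂ] EuclideanSpace ℂ (Fin 3)) : Prop :=
  ∀ l : ℝ, specE T l ≤ specE S l

/-!
The value `I − P_k` of the section at `A` is a rank-two projection. Its `A`-support is itself
when `P_k ∈ A` and `I` otherwise, since the only projections above it are itself and `I`; and
an abelian algebra never contains both of the noncommuting `P₁`, `P₂`. This gives compatibility.

If `A₀` induced the section, its restrictions to the algebras generated by `P₁` and by `P₂`
would put `P₁ ⊔ P₂ =: W` into the spectral subspace `E^{A₀}_0`, while its restriction `I` to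
the algebra generated by `P_W` (which contains neither `P₁` nor `P₂`: each commutes with `P_W`
but not with the other) forces `E^{A₀}_1 = ⊤`. Then `A₀ ≤_s I − P_W`, an element of that
algebra, so minimality of the restriction gives `I ≤_s I − P_W`, i.e. `W = 0`.
-/

local notation "H3" => EuclideanSpace ℂ (Fin 3)
local notation "L3" => (EuclideanSpace ℂ (Fin 3) →L[ℂ] EuclideanSpace ℂ (Fin 3))

/-- The proposed global section `A ↦ Q_A`. -/
def sectionQ (P₁ P₂ : Submodule ℂ H3) (A : StarSubalgebra ℂ L3) : Submodule ℂ H3 :=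
  if opOf P₁ ∈ A then P₁ᗮ else if opOf P₂ ∈ A then P₂ᗮ else ⊤

/-- `ρ_A(A₀) = opOf Q`: `opOf Q` is the least element of `A_sa` above `A₀` in the spectral
order. -/
def IsRestriction (A₀ : L3) (A : StarSubalgebra ℂ L3) (Q : Submodule ℂ H3) : Prop :=
  opOf Q ∈ A ∧ specLE A₀ (opOf Q) ∧
    ∀ C ∈ A, IsSelfAdjoint C → specLE A₀ C → specLE (opOf Q) C

theorem opOf_eq_starProjection (K : Submodule ℂ H3) : opOf K = K.starProjection := rfl

theorem isSelfAdjoint_opOf (K : Submodule ℂ H3) : IsSelfAdjoint (opOf K) :=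
  isSelfAdjoint_starProjection K

theorem opOf_top : opOf (⊤ : Submodule ℂ H3) = 1 :=
  Submodule.starProjection_top'

theorem opOf_orthogonal (K : Submodule ℂ H3) : opOf Kᗮ = 1 - opOf K :=
  Submodule.starProjection_orthogonal' K

theorem commute_opOf_of_le {K L : Submodule ℂ H3} (h : K ≤ L) : Commute (opOf K) (opOf L) :=
  IsStarProjection.commute_of_le isStarProjection_starProjection isStarProjection_starProjection
    (Submodule.starProjection_le_starProjection_iff.mpr h)

theorem opOf_orthogonal_mem_iff {A : StarSubalgebra ℂ L3} {K : Submodule ℂ H3} :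
    opOf Kᗮ ∈ A ↔ opOf K ∈ A := by
  rw [opOf_orthogonal]
  exact ⟨fun h => by simpa using sub_mem (one_mem A) h, sub_mem (one_mem A)⟩

section Support

variable {A : StarSubalgebra ℂ L3} {K : Submodule ℂ H3}

theorem suppA_of_opOf_mem (h : opOf K ∈ A) : suppA A K = K :=
  le_antisymm (sInf_le ⟨h, le_rfl⟩) (le_sInf fun _ hW => hW.2)

theorem suppA_orthogonal_of_isAtom (hK : IsAtom K) (h : opOf K ∉ A) : suppA A Kᗮ = ⊤ := by
  refine eq_top_iff.mpr (le_sInf fun W ⟨hWA, hKW⟩ => ?_)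
  have hWK : Wᗮ ≤ K := by simpa using Submodule.orthogonal_le hKW
  rcases hK.le_iff.mp hWK with hW | hW
  · exact (Submodule.orthogonal_eq_bot_iff.mp hW).ge
  · have hWeq : W = Kᗮ := by rw [← hW, Submodule.orthogonal_orthogonal]
    exact absurd (opOf_orthogonal_mem_iff.mp (hWeq ▸ hWA)) h

theorem suppA_orthogonal_of_finrank_eq_one (hK : Module.finrank ℂ K = 1) :
    suppA A Kᗮ = if opOf K ∈ A then Kᗮ else ⊤ := by
  split_ifs with h
  · exact suppA_of_opOf_mem (opOf_orthogonal_mem_iff.mpr h)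
  · exact suppA_orthogonal_of_isAtom (Submodule.isAtom_iff_finrank_eq_one.mpr hK) h

end Support

theorem suppA_sectionQ {P₁ P₂ : Submodule ℂ H3} (h1 : Module.finrank ℂ P₁ = 1)
    (h2 : Module.finrank ℂ P₂ = 1) (hnc : ¬Commute (opOf P₁) (opOf P₂))
    {A B : StarSubalgebra ℂ L3} (hB : IsAbelianStar B) (hAB : A ≤ B) :
    suppA A (sectionQ P₁ P₂ B) = sectionQ P₁ P₂ A := by
  have hB₁ : opOf P₁ ∈ B → opOf P₂ ∉ A := fun hb ha => hnc (hB _ hb _ (hAB ha))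
  unfold sectionQ
  by_cases hb1 : opOf P₁ ∈ B
  · simp [hb1, hB₁ hb1, suppA_orthogonal_of_finrank_eq_one h1]
  have ha1 : opOf P₁ ∉ A := fun h => hb1 (hAB h)
  by_cases hb2 : opOf P₂ ∈ B
  · simp [hb1, hb2, ha1, suppA_orthogonal_of_finrank_eq_one h2]
  have ha2 : opOf P₂ ∉ A := fun h => hb2 (hAB h)
  simp [hb1, hb2, ha1, ha2, suppA_of_opOf_mem (opOf_top ▸ one_mem A : opOf ⊤ ∈ A)]

theorem specE_mono (T : L3) {l l' : ℝ} (h : l ≤ l') : specE T l ≤ specE T l' :=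
  iSup_le fun m => le_iSup_of_le ⟨m.1, m.2.trans h⟩ le_rfl

theorem eigenspace_opOf (K : Submodule ℂ H3) (m : ℂ) :
    Module.End.eigenspace (opOf K).toLinearMap m =
      if m = 0 then Kᗮ else if m = 1 then K else ⊥ := by
  ext x
  rw [Module.End.mem_eigenspace_iff, ContinuousLinearMap.coe_coe, opOf_eq_starProjection]
  split_ifs with h0 h1
  · simp [h0, Submodule.starProjection_apply_eq_zero_iff]
  · simp [h1, Submodule.starProjection_eq_self_iff]
  refine ⟨fun hx => ?_, fun hx => by simp [(Submodule.mem_bot ℂ).mp hx]⟩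
  have hxK : x ∈ K := by
    have := K.smul_mem m⁻¹ (hx ▸ K.starProjection_apply_mem x)
    rwa [inv_smul_smul₀ h0] at this
  rw [Submodule.starProjection_eq_self_iff.mpr hxK] at hx
  have : (1 - m) • x = 0 := by rw [sub_smul, one_smul, ← hx, sub_self]
  exact (Submodule.mem_bot ℂ).mpr
    ((smul_eq_zero.mp this).resolve_left (sub_ne_zero.mpr (Ne.symm h1)))

theorem specE_opOf (K : Submodule ℂ H3) (l : ℝ) :
    specE (opOf K) l = if l < 0 then ⊥ else if l < 1 then Kᗮ else ⊤ := by
  have eig0 : Module.End.eigenspace (opOf K).toLinearMap ((0 : ℝ) : ℂ) = Kᗮ := by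
    rw [eigenspace_opOf]; simp
  have eig1 : Module.End.eigenspace (opOf K).toLinearMap ((1 : ℝ) : ℂ) = K := by
    rw [eigenspace_opOf]; simp
  unfold specE
  apply le_antisymm
  · refine iSup_le fun ⟨m, hm⟩ => ?_
    simp only [eigenspace_opOf, Complex.ofReal_eq_zero, Complex.ofReal_eq_one]
    split_ifs <;> first | exact bot_le | exact le_top | exact le_rfl | (exfalso; linarith)
  split_ifs with hl0 hl1
  · exact bot_le
  · exact le_iSup_of_le ⟨0, not_lt.mp hl0⟩ eig0.ge
  · rw [← K.sup_orthogonal_of_hasOrthogonalProjection]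
    exact sup_le (le_iSup_of_le ⟨1, not_lt.mp hl1⟩ eig1.ge)
      (le_iSup_of_le ⟨0, by linarith⟩ eig0.ge)

theorem specLE_opOf_iff (T : L3) (K : Submodule ℂ H3) :
    specLE T (opOf K) ↔ Kᗮ ≤ specE T 0 ∧ specE T 1 = ⊤ := by
  refine ⟨fun h => ⟨by simpa [specE_opOf] using h 0,
    by simpa [specE_opOf, not_lt.mpr zero_le_one] using h 1⟩, fun ⟨h0, h1⟩ l => ?_⟩
  rw [specE_opOf]
  split_ifs with hl0 hl1
  · exact bot_le
  · exact h0.trans (specE_mono T (not_lt.mp hl0))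
  · rw [← h1]
    exact specE_mono T (not_lt.mp hl1)

theorem isAbelianStar_adjoin_opOf (K : Submodule ℂ H3) :
    IsAbelianStar (StarAlgebra.adjoin ℂ {opOf K}) := by
  have : IsStarNormal (opOf K) := (isSelfAdjoint_opOf K).isStarNormal
  exact fun _ ha _ hb => setLike_mul_comm ha hb

theorem opOf_not_mem_adjoin_opOf {K L W : Submodule ℂ H3} (hLW : Commute (opOf L) (opOf W))
    (hKL : ¬Commute (opOf K) (opOf L)) : opOf K ∉ StarAlgebra.adjoin ℂ {opOf W} := by
  intro hK
  have hL : opOf L ∈ StarSubalgebra.centralizer ℂ {opOf W} := by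
    rw [StarSubalgebra.mem_centralizer_iff]
    simpa [(isSelfAdjoint_opOf W).star_eq] using hLW.symm.eq
  have hK' := StarAlgebra.adjoin_le_centralizer_centralizer ℂ _ hK
  rw [StarSubalgebra.mem_centralizer_iff] at hK'
  exact hKL (hK' _ hL).1.symm

theorem not_forall_isRestriction_sectionQ {P₁ P₂ : Submodule ℂ H3}
    (hnc : ¬Commute (opOf P₁) (opOf P₂)) (A₀ : L3) :
    ¬∀ A, IsAbelianStar A → IsRestriction A₀ A (sectionQ P₁ P₂ A) := by
  intro hA₀
  set W := P₁ ⊔ P₂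
  have hQ₁ : sectionQ P₁ P₂ (StarAlgebra.adjoin ℂ {opOf P₁}) = P₁ᗮ :=
    if_pos (StarAlgebra.self_mem_adjoin_singleton ℂ _)
  have hQ₂ : sectionQ P₁ P₂ (StarAlgebra.adjoin ℂ {opOf P₂}) = P₂ᗮ := by
    rw [sectionQ, if_neg (opOf_not_mem_adjoin_opOf (Commute.refl _) hnc),
      if_pos (StarAlgebra.self_mem_adjoin_singleton ℂ _)]
  have hQW : sectionQ P₁ P₂ (StarAlgebra.adjoin ℂ {opOf W}) = ⊤ := by
    rw [sectionQ, if_neg (opOf_not_mem_adjoin_opOf (commute_opOf_of_le le_sup_right) hnc),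
      if_neg (opOf_not_mem_adjoin_opOf (commute_opOf_of_le le_sup_left) (mt Commute.symm hnc))]
  obtain ⟨-, h₁, -⟩ := hA₀ _ (isAbelianStar_adjoin_opOf P₁)
  obtain ⟨-, h₂, -⟩ := hA₀ _ (isAbelianStar_adjoin_opOf P₂)
  obtain ⟨-, hW, hmin⟩ := hA₀ _ (isAbelianStar_adjoin_opOf W)
  rw [hQ₁, specLE_opOf_iff, Submodule.orthogonal_orthogonal] at h₁
  rw [hQ₂, specLE_opOf_iff, Submodule.orthogonal_orthogonal] at h₂
  rw [hQW, specLE_opOf_iff] at hW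
  rw [hQW] at hmin
  have hA₀W : specLE A₀ (opOf Wᗮ) := by
    rw [specLE_opOf_iff, Submodule.orthogonal_orthogonal]
    exact ⟨sup_le h₁.1 h₂.1, hW.2⟩
  have hWmem : opOf Wᗮ ∈ StarAlgebra.adjoin ℂ {opOf W} :=
    opOf_orthogonal_mem_iff.mpr (StarAlgebra.self_mem_adjoin_singleton ℂ _)
  have hWbot := ((specLE_opOf_iff _ _).mp (hmin _ hWmem (isSelfAdjoint_opOf _) hA₀W)).1
  simp only [Submodule.orthogonal_orthogonal, specE_opOf, lt_irrefl, zero_lt_one, if_false,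
    if_true, Submodule.top_orthogonal_eq_bot] at hWbot
  exact hnc (commute_opOf_of_le (le_sup_left.trans hWbot |>.trans bot_le))

/-- for noncommuting rank-one projections `P₁, P₂` in `L(ℂ³)`, the
family `A ↦ Q_A`, with `Q_A = I − P_k` if `P_k ∈ A` and `Q_A = I` otherwise, is a
global section of the observable presheaf (compatible under the support
restriction maps), but there is no selfadjoint `A₀ ∈ L(ℂ³)` whose restriction
`ρ_A(A₀)` (the spectral-order minimum of `{C ∈ A_sa | A₀ ≤_s C}`) equals `Q_A`
for every abelian subalgebra `A`. -/
theorem global_section_not_induced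
    (P₁ P₂ : Submodule ℂ (EuclideanSpace ℂ (Fin 3)))
    (h1 : Module.finrank ℂ P₁ = 1) (h2 : Module.finrank ℂ P₂ = 1)
    (hnc : opOf P₁ * opOf P₂ ≠ opOf P₂ * opOf P₁) :
    (∀ A B : StarSubalgebra ℂ (EuclideanSpace ℂ (Fin 3) →L[ℂ] EuclideanSpace ℂ (Fin 3)),
        IsAbelianStar A → IsAbelianStar B → A ≤ B →
        suppA A (if opOf P₁ ∈ B then P₁ᗮ else if opOf P₂ ∈ B then P₂ᗮ else ⊤) =
          (if opOf P₁ ∈ A then P₁ᗮ else if opOf P₂ ∈ A then P₂ᗮ else ⊤)) ∧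
    ¬ ∃ A₀ : EuclideanSpace ℂ (Fin 3) →L[ℂ] EuclideanSpace ℂ (Fin 3),
        IsSelfAdjoint A₀ ∧
        ∀ A : StarSubalgebra ℂ (EuclideanSpace ℂ (Fin 3) →L[ℂ] EuclideanSpace ℂ (Fin 3)),
          IsAbelianStar A →
          opOf (if opOf P₁ ∈ A then P₁ᗮ else if opOf P₂ ∈ A then P₂ᗮ else ⊤) ∈ A ∧
          specLE A₀ (opOf (if opOf P₁ ∈ A then P₁ᗮ else if opOf P₂ ∈ A then P₂ᗮ else ⊤)) ∧
          ∀ C ∈ A, IsSelfAdjoint C → specLE A₀ C →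
            specLE (opOf (if opOf P₁ ∈ A then P₁ᗮ else if opOf P₂ ∈ A then P₂ᗮ else ⊤)) C := by
  refine ⟨fun A B _ hB hAB => suppA_sectionQ h1 h2 hnc hB hAB, ?_⟩
  rintro ⟨A₀, -, hA₀⟩
  exact not_forall_isRestriction_sectionQ hnc A₀ hA₀

end
end
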